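/- Let κ ∈ (0,1), let U be an odd zero-up ground state for parameter κ, and set N := U(π/2). Then the energy satisfies E(U) = ∫_{−π}^{π} ( (1/2)(U(x)² − 1)² − (1/4)(N² − 1)² ) dx. -/

import Mathlib

/-!
Multiplying the equation by `U'` shows that `κ² U'² / 2 + U² / 2 - U⁴ / 4` is constant. At the
maximum `π / 2` of `U` we have `U' = 0`, so the constant is `N² / 2 - N⁴ / 4`; eliminating
`κ² U'²` with it turns the integrand of the energy pointwise into the claimed one.
-/

open Real MeasureTheory Set

noncomputable section

/-- An odd zero-up ground state for parameter `κ`: a `2π`-periodic, odd, twice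
continuously differentiable function `U : ℝ → ℝ` satisfying
`κ² U'' + U − U³ = 0` on `ℝ`, with `U' > 0` on `[0, π/2)` and `U' < 0` on `(π/2, π]`. -/
def IsOddZeroUpGroundState (κ : ℝ) (U : ℝ → ℝ) : Prop :=
  ContDiff ℝ 2 U ∧
  Function.Periodic U (2 * π) ∧
  (∀ x : ℝ, U (-x) = - U x) ∧
  (∀ x : ℝ, κ ^ 2 * deriv (deriv U) x + U x - U x ^ 3 = 0) ∧
  (∀ x ∈ Set.Ico (0 : ℝ) (π / 2), 0 < deriv U x) ∧
  (∀ x ∈ Set.Ioc (π / 2) π, deriv U x < 0)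

/-- The Allen–Cahn energy with diffusion coefficient `κ`. -/
def energy (κ : ℝ) (u : ℝ → ℝ) : ℝ :=
  ∫ x in (-π)..π, (κ ^ 2 / 2 * (deriv u x) ^ 2 + (1 - u x ^ 2) ^ 2 / 4)

/-- The `L²` norm over one period `(-π, π)`. -/
def L2norm (f : ℝ → ℝ) : ℝ := Real.sqrt (∫ x in (-π)..π, (f x) ^ 2)

/-- The `H¹` norm over one period `(-π, π)`. -/
def H1norm (f : ℝ → ℝ) : ℝ := Real.sqrt (L2norm f ^ 2 + L2norm (deriv f) ^ 2)

theorem kinetic_add_potential_eq {c : ℝ} {f V v : ℝ → ℝ} (hf : Differentiable ℝ f)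
    (hf' : Differentiable ℝ (deriv f)) (hV : ∀ u, HasDerivAt V (v u) u)
    (hode : ∀ x, c * deriv (deriv f) x + v (f x) = 0) (x y : ℝ) :
    c / 2 * deriv f x ^ 2 + V (f x) = c / 2 * deriv f y ^ 2 + V (f y) := by
  have hderiv (x : ℝ) : HasDerivAt (fun x : ℝ => c / 2 * deriv f x ^ 2 + V (f x)) 0 x :=
    ((((hf' x).hasDerivAt.fun_pow 2).const_mul (c / 2)).fun_add
      ((hV (f x)).comp x (hf x).hasDerivAt)).congr_deriv
      (by linear_combination deriv f x * hode x)
  exact is_const_of_deriv_eq_zero (fun x => (hderiv x).differentiableAt)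
    (fun x => (hderiv x).deriv) x y

namespace IsOddZeroUpGroundState

variable {κ : ℝ} {U : ℝ → ℝ}

theorem differentiable (hU : IsOddZeroUpGroundState κ U) : Differentiable ℝ U :=
  hU.1.differentiable (by norm_num)

theorem differentiable_deriv (hU : IsOddZeroUpGroundState κ U) :
    Differentiable ℝ (deriv U) :=
  ((contDiff_succ_iff_deriv (n := 1)).mp hU.1).2.2.differentiable one_ne_zero

theorem isLocalMax_pi_div_two (hU : IsOddZeroUpGroundState κ U) : IsLocalMax U (π / 2) :=
  isLocalMax_of_deriv_Ioo (by positivity) (by linarith [pi_pos])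
    hU.differentiable.continuous.continuousAt hU.differentiable.differentiableOn
    hU.differentiable.differentiableOn
    (fun x hx => (hU.2.2.2.2.1 x ⟨hx.1.le, hx.2⟩).le)
    (fun x hx => (hU.2.2.2.2.2 x ⟨hx.1, hx.2.le⟩).le)

theorem deriv_pi_div_two (hU : IsOddZeroUpGroundState κ U) : deriv U (π / 2) = 0 :=
  hU.isLocalMax_pi_div_two.deriv_eq_zero

theorem first_integral (hU : IsOddZeroUpGroundState κ U) (x : ℝ) :
    κ ^ 2 / 2 * deriv U x ^ 2 + (U x ^ 2 / 2 - U x ^ 4 / 4)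
      = U (π / 2) ^ 2 / 2 - U (π / 2) ^ 4 / 4 := by
  have hV (u : ℝ) : HasDerivAt (fun u : ℝ => u ^ 2 / 2 - u ^ 4 / 4) (u - u ^ 3) u :=
    (((hasDerivAt_pow 2 u).div_const 2).fun_sub ((hasDerivAt_pow 4 u).div_const 4)).congr_deriv
      (by ring)
  have h := kinetic_add_potential_eq (c := κ ^ 2) hU.differentiable hU.differentiable_deriv hV
    (fun x => by linear_combination hU.2.2.2.1 x) x (π / 2)
  simpa [hU.deriv_pi_div_two] using h

end IsOddZeroUpGroundState

theorem ground_state_energy_formula_general (κ : ℝ)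
    (U : ℝ → ℝ) (hU : IsOddZeroUpGroundState κ U) :
    energy κ U
      = ∫ x in (-π)..π,
          (1 / 2 * ((U x) ^ 2 - 1) ^ 2 - 1 / 4 * ((U (π / 2)) ^ 2 - 1) ^ 2) :=
  intervalIntegral.integral_congr fun x _ => by
    linear_combination hU.first_integral x

/-- the ground state energy can be rewritten as
`E(U) = ∫_{−π}^{π} ( ½(U²−1)² − ¼(N²−1)² ) dx` with `N = U(π/2)`. -/
theorem ground_state_energy_formula (κ : ℝ) (hκ : 0 < κ) (hκ1 : κ < 1)
    (U : ℝ → ℝ) (hU : IsOddZeroUpGroundState κ U) :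
    energy κ U
      = ∫ x in (-π)..π,
          (1 / 2 * ((U x) ^ 2 - 1) ^ 2 - 1 / 4 * ((U (π / 2)) ^ 2 - 1) ^ 2) :=
  ground_state_energy_formula_general κ U hU
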